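/- arXiv:2001.09864 — 5 statements merged into one kernel-verified Lean document; each statement's English description precedes it below -/
import Mathlib

section
/- Let R be a semiring equipped with a total order ⪯, and let L1 and L2 be R-annotated languages over a finite alphabet Δ. Then L1 ⪯ L2 (i.e., for every word w with L1(w) ≠ 0, also L2(w) ≠ 0 and L2(w) ⪯ L1(w)) holds if and only if both: (1) ⌊L1⌋ ⊆ ⌊L2⌋, and (2) for every element x of R, ⌊L2^{ẋ}⌋ ∩ ⌊L1⌋ ⊆ ⌊L1^{x̆}⌋. -/
/-- The support `⌊L⌋` of an annotated language `L : Δ* → R`: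
the set of words with nonzero annotation. -/
def annSupport {Δ R : Type*} [Zero R] (L : List Δ → R) : Set (List Δ) :=
  {w | L w ≠ 0}

/-- The support of the `x`-outer sphere `L^{x̆} = {(w,y) ∈ L : y ≠ 0 ∧ x ⪯ y}`. -/
def outerSphereSupp {Δ R : Type*} [Zero R] [Preorder R] (L : List Δ → R) (x : R) :
    Set (List Δ) :=
  {w | L w ≠ 0 ∧ x ≤ L w}

/-- The support of the `x`-stripe `L^{ẋ} = {(w,y) ∈ L : y ≠ 0 ∧ y = x}`. -/
def stripeSupp {Δ R : Type*} [Zero R] (L : List Δ → R) (x : R) : Set (List Δ) :=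
  {w | L w ≠ 0 ∧ L w = x}

/-- Containment of annotated languages: `L₁ ⪯ L₂` iff every word with nonzero
annotation in `L₁` has nonzero annotation in `L₂` which is `⪯`-better. -/
def annContained {Δ R : Type*} [Zero R] [Preorder R] (L₁ L₂ : List Δ → R) : Prop :=
  ∀ w, L₁ w ≠ 0 → L₂ w ≠ 0 ∧ L₂ w ≤ L₁ w

/-- For annotated languages over a totally ordered semiring,
`L₁ ⪯ L₂` iff (1) `⌊L₁⌋ ⊆ ⌊L₂⌋`, and (2) for every `x ∈ R`,
`⌊L₂^{ẋ}⌋ ∩ ⌊L₁⌋ ⊆ ⌊L₁^{x̆}⌋`. -/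
theorem annContained_iff_sphere_conditions
    {Δ R : Type*} [Fintype Δ] [Semiring R] [LinearOrder R]
    (L₁ L₂ : List Δ → R) :
    annContained L₁ L₂ ↔
      annSupport L₁ ⊆ annSupport L₂ ∧
      ∀ x : R, stripeSupp L₂ x ∩ annSupport L₁ ⊆ outerSphereSupp L₁ x := by
  constructor
  · intro h
    refine ⟨fun w hw => (h w hw).1, fun x w hw => ?_⟩
    obtain ⟨⟨h2, hx⟩, h1⟩ := hw
    exact ⟨h1, hx ▸ (h w h1).2⟩
  · rintro ⟨hsub, hstr⟩ w hw
    refine ⟨hsub hw, ?_⟩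
    exact (hstr (L₂ w) ⟨⟨hsub hw, rfl⟩, hw⟩).2
end

section
/- Let A be an annotated automaton over the tropical semiring 𝒯 = (ℕ ∪ {∞}, min, +, ∞, 0) with finite state set, finite alphabet Δ, finite transition set τ_A ⊆ P × Δ × (ℕ ∪ {∞}) × P, initial state q_0 and final states F_A, and let L = [A] be its annotated language. Fix k ∈ ℕ and let M_k be the mask automaton over alphabet {0,…,k} with states {p_0,…,p_k}, initial state p_0, all states final, and transitions (p_i, n, p_{i+n}) for 0 ≤ i ≤ k, 0 ≤ n ≤ k−i. Let C_k = A × M_k be the product automaton with states P × {p_0,…,p_k}, initial state (q_0, p_0), final states F_A × {p_0,…,p_k}, and transitions ((q,p), r, n, (q',p')) whenever (q, r, n, q') ∈ τ_A and (p, n, p') ∈ τ_k. Then [C_k] = L^k, i.e., for every word w: [C_k](w) = [A](w) if [A](w) ≤ k, and [C_k](w) = ∞ otherwise. -/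
/-- Transition paths in an annotated automaton over the tropical semiring
`𝒯 = (ℕ ∪ {∞}, min, +, ∞, 0)`: `TropPath τ q w c q'` means there is a path of
transitions in `τ` from `q` to `q'` spelling the word `w` whose weight
(tropical product, i.e. sum, of the transition weights) is `c`. -/
inductive TropPath {P Δ : Type*} (τ : Set (P × Δ × ℕ∞ × P)) :
    P → List Δ → ℕ∞ → P → Prop
  | nil (q : P) : TropPath τ q [] 0 q
  | cons {q p q' : P} {r : Δ} {x c : ℕ∞} {w : List Δ} :
      (q, r, x, p) ∈ τ → TropPath τ p w c q' → TropPath τ q (r :: w) (x + c) q'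

/-- The annotated language `[A]` of a tropical annotated automaton with
transitions `τ`, initial state `q0` and final states `F`: the tropical sum
(minimum) of the weights of all accepting paths spelling `w` (`∞` if none). -/
noncomputable def tropVal {P Δ : Type*} (τ : Set (P × Δ × ℕ∞ × P)) (q0 : P)
    (F : Set P) (w : List Δ) : ℕ∞ :=
  sInf {c | ∃ qf ∈ F, TropPath τ q0 w c qf}

/-- For a tropical annotated automaton `A` (finite states,
finite alphabet, finite transition set `τA`, initial state `q0`, final states
`FA`) and `k ∈ ℕ`, the product `C_k = A × M_k` with the mask automaton `M_k`
(states `{p_0,…,p_k}` = `Fin (k+1)`, initial state `p_0`, all states final,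
transitions `(p_i, n, p_{i+n})` for `0 ≤ n ≤ k − i`) recognizes the `k`-th
inner sphere of `L = [A]`: for every word `w`, `[C_k](w) = [A](w)` if
`[A](w) ≤ k`, and `[C_k](w) = ∞` otherwise. The product transitions are
`((q,p), r, n, (q',p'))` with `(q,r,n,q') ∈ τA` and `(p,n,p') ∈ τ_k`, the
mask transition being encoded by `n = m` for some `m : ℕ` with `p' = p + m`
(membership of `p'` in `Fin (k+1)` encodes `m ≤ k − p`). -/
theorem tropical_product_computes_inner_sphere
    {P Δ : Type*} [Fintype P] [Fintype Δ] (k : ℕ)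
    (τA : Finset (P × Δ × ℕ∞ × P)) (q0 : P) (FA : Set P) (w : List Δ) :
    tropVal
        {t : (P × Fin (k + 1)) × Δ × ℕ∞ × (P × Fin (k + 1)) |
          (t.1.1, t.2.1, t.2.2.1, t.2.2.2.1) ∈ τA ∧
          ∃ m : ℕ, t.2.2.1 = (m : ℕ∞) ∧ (t.2.2.2.2 : ℕ) = (t.1.2 : ℕ) + m}
        (q0, (0 : Fin (k + 1))) (FA ×ˢ Set.univ) w =
      if tropVal (↑τA) q0 FA w ≤ (k : ℕ∞) then tropVal (↑τA) q0 FA w else ⊤ := by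
  classical
  set τC : Set ((P × Fin (k + 1)) × Δ × ℕ∞ × (P × Fin (k + 1))) :=
    {t | (t.1.1, t.2.1, t.2.2.1, t.2.2.2.1) ∈ τA ∧
      ∃ m : ℕ, t.2.2.1 = (m : ℕ∞) ∧ (t.2.2.2.2 : ℕ) = (t.1.2 : ℕ) + m} with hτC
  have fwd : ∀ {w : List Δ} {c : ℕ∞} {s s' : P × Fin (k + 1)}, TropPath τC s w c s' →
      TropPath (↑τA) s.1 w c s'.1 ∧ ∃ n : ℕ, c = n ∧ (s'.2 : ℕ) = (s.2 : ℕ) + n := by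
    intro w c s s' h
    induction h with
    | nil q => exact ⟨TropPath.nil _, 0, by simp⟩
    | cons ht hp ih =>
      obtain ⟨hpA, n, hcn, hval⟩ := ih
      obtain ⟨hA, m, hxm, hval'⟩ := ht
      dsimp only at hA hxm hval'
      refine ⟨TropPath.cons hA hpA, m + n, ?_, by omega⟩
      rw [hxm, hcn]; push_cast; ring
  have bwd : ∀ {w : List Δ} {c : ℕ∞} {q q' : P}, TropPath (↑τA) q w c q' → ∀ n : ℕ, c = n →
      ∀ (p : Fin (k + 1)) (hpk : (p : ℕ) + n ≤ k),
      TropPath τC (q, p) w c (q', ⟨(p : ℕ) + n, by omega⟩) := by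
    intro w c q q' h
    induction h with
    | nil q =>
      intro n hn p hpk
      have hn0 : n = 0 := by exact_mod_cast hn.symm
      subst hn0
      have : (⟨(p : ℕ) + 0, by omega⟩ : Fin (k + 1)) = p := by
        apply Fin.ext; simp
      rw [this]
      exact TropPath.nil _
    | @cons q p1 q' r x c w ht hp ih =>
      intro n hn p hpk
      have hxt : x ≠ ⊤ := by
        intro hx; rw [hx, top_add] at hn; exact (ENat.coe_ne_top n) hn.symm
      have hct : c ≠ ⊤ := by
        intro hc; rw [hc, add_top] at hn; exact (ENat.coe_ne_top n) hn.symm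
      obtain ⟨m, hm⟩ : ∃ m : ℕ, x = (m : ℕ∞) := ⟨x.toNat, (ENat.coe_toNat hxt).symm⟩
      obtain ⟨n', hn'⟩ : ∃ n' : ℕ, c = (n' : ℕ∞) := ⟨c.toNat, (ENat.coe_toNat hct).symm⟩
      subst hm hn'
      have hmn : m + n' = n := by exact_mod_cast hn
      have htC : ((q, p), r, (m : ℕ∞), (p1, (⟨(p : ℕ) + m, by omega⟩ : Fin (k + 1)))) ∈ τC := by
        refine ⟨ht, m, rfl, ?_⟩
        simp
      have hrest := ih n' rfl ⟨(p : ℕ) + m, by omega⟩ (by simp; omega)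
      have hfin : (⟨((⟨(p : ℕ) + m, by omega⟩ : Fin (k + 1)) : ℕ) + n', by simp; omega⟩ :
          Fin (k + 1)) = ⟨(p : ℕ) + n, by omega⟩ := by
        apply Fin.ext; simp; omega
      rw [hfin] at hrest
      exact TropPath.cons htC hrest
  set SA : Set ℕ∞ := {c | ∃ qf ∈ FA, TropPath (↑τA) q0 w c qf} with hSA
  set SC : Set ℕ∞ := {c | ∃ qf ∈ (FA ×ˢ Set.univ : Set (P × Fin (k + 1))),
    TropPath τC (q0, (0 : Fin (k + 1))) w c qf} with hSC
  have hSCeq : SC = {c | c ∈ SA ∧ c ≤ (k : ℕ∞)} := by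
    ext c
    constructor
    · rintro ⟨⟨qf, pf⟩, hqf, hpath⟩
      obtain ⟨hA, n, hcn, hval⟩ := fwd hpath
      have h0 : ((0 : Fin (k + 1)) : ℕ) = 0 := rfl
      constructor
      · exact ⟨qf, hqf.1, hA⟩
      · rw [hcn]
        have : n ≤ k := by have := pf.isLt; omega
        exact_mod_cast this
    · rintro ⟨⟨qf, hqf, hpath⟩, hck⟩
      have hct : c ≠ ⊤ := by
        intro hc; rw [hc] at hck
        exact (ENat.coe_ne_top k) (top_le_iff.mp hck)
      obtain ⟨n, hn⟩ : ∃ n : ℕ, c = (n : ℕ∞) := ⟨c.toNat, (ENat.coe_toNat hct).symm⟩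
      subst hn
      have hnk : n ≤ k := by exact_mod_cast hck
      have := bwd hpath n rfl (0 : Fin (k + 1)) (by simp; omega)
      exact ⟨(qf, ⟨((0 : Fin (k + 1)) : ℕ) + n, by simp; omega⟩), ⟨hqf, trivial⟩, this⟩
  show sInf SC = if sInf SA ≤ (k : ℕ∞) then sInf SA else ⊤
  by_cases h : sInf SA ≤ (k : ℕ∞)
  · rw [if_pos h]
    have hne : SA.Nonempty := by
      by_contra hcon
      rw [Set.not_nonempty_iff_eq_empty] at hcon
      rw [hcon, sInf_empty] at h
      exact (ENat.coe_ne_top k) (top_le_iff.mp h)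
    have hmem : sInf SA ∈ SA := csInf_mem hne
    have hmemC : sInf SA ∈ SC := by rw [hSCeq]; exact ⟨hmem, h⟩
    apply le_antisymm (sInf_le hmemC)
    apply le_sInf
    intro b hb
    rw [hSCeq] at hb
    exact sInf_le hb.1
  · rw [if_neg h]
    have : SC = ∅ := by
      rw [hSCeq]
      ext c
      simp only [Set.mem_setOf_eq, Set.mem_empty_iff_false, iff_false]
      rintro ⟨hc, hck⟩
      exact h (le_trans (sInf_le hc) hck)
    rw [this, sInf_empty]
end

section
/- Let A be an annotated automaton over the fuzzy semiring ℱ = (ℕ ∪ {∞}, min, max, ∞, 0) with finite state set, finite alphabet Δ, finite transition set, initial state and final states, and let L = [A] be its annotated language. Fix k ∈ ℕ and let A' be the annotated automaton obtained from A by deleting every transition whose weight is greater than k. Then [A'] = L^k, i.e., for every word w: [A'](w) = [A](w) if [A](w) ≤ k, and [A'](w) = ∞ otherwise. -/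
/-- Transition paths in an annotated automaton over the fuzzy semiring
`ℱ = (ℕ ∪ {∞}, min, max, ∞, 0)`: `FuzzyPath τ q w c q'` means there is a path
of transitions in `τ` from `q` to `q'` spelling the word `w` whose weight
(fuzzy product, i.e. maximum, of the transition weights) is `c`. -/
inductive FuzzyPath {P Δ : Type*} (τ : Set (P × Δ × ℕ∞ × P)) :
    P → List Δ → ℕ∞ → P → Prop
  | nil (q : P) : FuzzyPath τ q [] 0 q
  | cons {q p q' : P} {r : Δ} {x c : ℕ∞} {w : List Δ} :
      (q, r, x, p) ∈ τ → FuzzyPath τ p w c q' → FuzzyPath τ q (r :: w) (max x c) q'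

/-- The annotated language `[A]` of a fuzzy annotated automaton with
transitions `τ`, initial state `q0` and final states `F`: the fuzzy sum
(minimum) of the weights of all accepting paths spelling `w` (`∞` if none). -/
noncomputable def fuzzyVal {P Δ : Type*} (τ : Set (P × Δ × ℕ∞ × P)) (q0 : P)
    (F : Set P) (w : List Δ) : ℕ∞ :=
  sInf {c | ∃ qf ∈ F, FuzzyPath τ q0 w c qf}

/-!
Since the weight of a path is the maximum of its transition weights, a path avoids every
transition of weight `> k` exactly when its weight is `≤ k`. Deleting those transitions thus
keeps precisely the accepting paths of weight `≤ k`, and the minimum over them is `[A](w)` when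
that minimum, which is attained because `ℕ∞` is well-ordered, is `≤ k`, and `∞` otherwise.
-/

open Set

theorem sInf_inter_Iic_eq_ite {α : Type*} [CompleteLinearOrder α] [WellFoundedLT α]
    (S : Set α) (k : α) : sInf (S ∩ Iic k) = if sInf S ≤ k then sInf S else ⊤ := by
  split_ifs with hk
  · rcases S.eq_empty_or_nonempty with rfl | hS
    · simp
    exact le_antisymm (sInf_le ⟨csInf_mem hS, hk⟩) (sInf_le_sInf inter_subset_left)
  · have hempty : S ∩ Iic k = ∅ :=
      eq_empty_of_forall_notMem fun c ⟨hc, hck⟩ => hk ((sInf_le hc).trans hck)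
    rw [hempty, sInf_empty]

namespace FuzzyPath

variable {P Δ : Type*} {τ : Set (P × Δ × ℕ∞ × P)} {k : ℕ∞} {q q' : P} {w : List Δ} {c : ℕ∞}

theorem weight_le_of_filter
    (h : FuzzyPath {t | t ∈ τ ∧ t.2.2.1 ≤ k} q w c q') : FuzzyPath τ q w c q' ∧ c ≤ k := by
  induction h with
  | nil q => exact ⟨nil q, zero_le⟩
  | cons ht _ ih => exact ⟨cons ht.1 ih.1, max_le ht.2 ih.2⟩

theorem filter_of_weight_le
    (h : FuzzyPath τ q w c q') (hc : c ≤ k) : FuzzyPath {t | t ∈ τ ∧ t.2.2.1 ≤ k} q w c q' := by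
  induction h with
  | nil q => exact nil q
  | cons ht _ ih =>
    exact cons ⟨ht, (le_max_left _ _).trans hc⟩ (ih ((le_max_right _ _).trans hc))

theorem filter_iff :
    FuzzyPath {t | t ∈ τ ∧ t.2.2.1 ≤ k} q w c q' ↔ FuzzyPath τ q w c q' ∧ c ≤ k :=
  ⟨weight_le_of_filter, fun h => filter_of_weight_le h.1 h.2⟩

end FuzzyPath

theorem fuzzyVal_filter_weight_le {P Δ : Type*} (τ : Set (P × Δ × ℕ∞ × P)) (k : ℕ∞)
    (q0 : P) (F : Set P) (w : List Δ) :
    fuzzyVal {t | t ∈ τ ∧ t.2.2.1 ≤ k} q0 F w =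
      if fuzzyVal τ q0 F w ≤ k then fuzzyVal τ q0 F w else ⊤ := by
  have hpaths : {c | ∃ qf ∈ F, FuzzyPath {t | t ∈ τ ∧ t.2.2.1 ≤ k} q0 w c qf} =
      {c | ∃ qf ∈ F, FuzzyPath τ q0 w c qf} ∩ Iic k := by
    ext c
    simp only [FuzzyPath.filter_iff, mem_ofPred_eq, mem_inter_iff, mem_Iic, ← and_assoc,
      exists_and_right]
  rw [fuzzyVal, hpaths, sInf_inter_Iic_eq_ite, fuzzyVal]

theorem fuzzy_deletion_computes_inner_sphere_general
    {P Δ : Type*} (k : ℕ)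
    (τ : Finset (P × Δ × ℕ∞ × P)) (q0 : P) (F : Set P) (w : List Δ) :
    fuzzyVal {t | t ∈ τ ∧ t.2.2.1 ≤ (k : ℕ∞)} q0 F w =
      if fuzzyVal (↑τ) q0 F w ≤ (k : ℕ∞) then fuzzyVal (↑τ) q0 F w else ⊤ :=
  fuzzyVal_filter_weight_le (↑τ) k q0 F w

/-- Let `A` be a fuzzy annotated automaton (finite states,
finite alphabet, finite transition set `τ`, initial state `q0`, final states
`F`) with `L = [A]`, and let `A'` be obtained from `A` by deleting every
transition of weight greater than `k`. Then `[A'] = L^k`: for every word `w`,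
`[A'](w) = [A](w)` if `[A](w) ≤ k`, and `[A'](w) = ∞` otherwise. -/
theorem fuzzy_deletion_computes_inner_sphere
    {P Δ : Type*} [Fintype P] [Fintype Δ] (k : ℕ)
    (τ : Finset (P × Δ × ℕ∞ × P)) (q0 : P) (F : Set P) (w : List Δ) :
    fuzzyVal {t | t ∈ τ ∧ t.2.2.1 ≤ (k : ℕ∞)} q0 F w =
      if fuzzyVal (↑τ) q0 F w ≤ (k : ℕ∞) then fuzzyVal (↑τ) q0 F w else ⊤ :=
  fuzzy_deletion_computes_inner_sphere_general k τ q0 F w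
end

section
/- Let B be a finite multi-edge automaton over a finite alphabet Δ, given by a finite state set P_B, an edge-multiplicity function (equivalently, parallel copies of transitions (p, r, p')), initial state p_{B,0} and final states F_B, and fix k ≥ 1. Let Ψ_k be the set of k×k Boolean matrices, and let B^k be the NFA with state set P_B^k × Ψ_k, initial state (p_{B,0}, …, p_{B,0}, ψ_0) where ψ_0[i,j] = 1 iff i = j, final states F_B^k × {ψ*} where ψ*[i,j] = 1 for all i, j, and transitions on letter r from (p_1, …, p_k, ψ) to (p_1', …, p_k', ψ') whenever for each i ∈ [1,k] an edge e_i of B labeled r from p_i to p_i' is chosen, and ψ'[i,j] = 1 iff ψ[i,j] = 1 or the chosen edges e_i and e_j differ. Then a word w is accepted by B^k if and only if there are at least k distinct accepting transition paths spelling w in B. -/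
/-- Accepting transition paths of a multi-edge automaton `B` over the alphabet
`Δ`, with edge type `E`, source/target maps `src`, `tgt`, labeling `lbl` and
final states `Fb`: `EdgePath src tgt lbl Fb q w l` means `l` is a sequence of
consecutive edges spelling `w`, starting at `q` and ending in a final state. -/
inductive EdgePath {P Δ E : Type*} (src tgt : E → P) (lbl : E → Δ) (Fb : Set P) :
    P → List Δ → List E → Prop
  | nil {q : P} : q ∈ Fb → EdgePath src tgt lbl Fb q [] []
  | cons {q : P} {r : Δ} {w : List Δ} {e : E} {l : List E} :
      src e = q → lbl e = r → EdgePath src tgt lbl Fb (tgt e) w l →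
      EdgePath src tgt lbl Fb q (r :: w) (e :: l)

/-- The Boolean-matrix product NFA `B^k` of a multi-edge automaton `B`:
states are `k`-tuples of states of `B` together with a `k × k` Boolean matrix
`ψ`; the initial state is `(p_{B,0}, …, p_{B,0}, ψ_0)` with `ψ_0` the identity
pattern; final states are `F_B^k × {ψ*}` with `ψ*` all-ones; a transition on
letter `r` simultaneously advances `k` edges of `B` labeled `r`, setting
`ψ'[i,j] = 1` iff `ψ[i,j] = 1` or the `i`-th and `j`-th chosen edges differ. -/
def powerNFA {P Δ E : Type*} [DecidableEq E] (src tgt : E → P) (lbl : E → Δ)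
    (k : ℕ) (p0 : P) (Fb : Set P) :
    NFA Δ ((Fin k → P) × (Fin k → Fin k → Bool)) where
  step := fun s r =>
    {s' | ∃ e : Fin k → E,
      (∀ i, lbl (e i) = r ∧ src (e i) = s.1 i ∧ tgt (e i) = s'.1 i) ∧
      s'.2 = fun i j => s.2 i j || decide (e i ≠ e j)}
  start := {(fun _ => p0, fun i j => decide (i = j))}
  accept := {s | (∀ i, s.1 i ∈ Fb) ∧ s.2 = fun _ _ => true}



lemma mem_evalFrom_union_iff {α σ : Type*} (M : NFA α σ) (S : Set σ) (w : List α) (t : σ) :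
    t ∈ M.evalFrom S w ↔ ∃ s ∈ S, t ∈ M.evalFrom {s} w := by
  induction w generalizing S with
  | nil => simp [NFA.evalFrom]
  | cons r w ih =>
    have h : ∀ T : Set σ, M.evalFrom T (r :: w) = M.evalFrom (M.stepSet T r) w := fun _ => rfl
    rw [h, ih]
    constructor
    · rintro ⟨u, hu, hT⟩
      rw [NFA.mem_stepSet] at hu
      obtain ⟨s, hs, hu⟩ := hu
      refine ⟨s, hs, ?_⟩
      rw [h, ih]
      exact ⟨u, by rw [NFA.mem_stepSet]; exact ⟨s, rfl, hu⟩, hT⟩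
    · rintro ⟨s, hs, hT⟩
      rw [h, ih] at hT
      obtain ⟨u, hu, hT⟩ := hT
      rw [NFA.mem_stepSet] at hu
      obtain ⟨s', hs', hu⟩ := hu
      refine ⟨u, ?_, hT⟩
      rw [NFA.mem_stepSet]
      exact ⟨s, hs, by cases hs'; exact hu⟩

lemma mem_evalFrom_cons_iff {α σ : Type*} (M : NFA α σ) (s : σ) (r : α) (w : List α) (t : σ) :
    t ∈ M.evalFrom {s} (r :: w) ↔ ∃ u ∈ M.step s r, t ∈ M.evalFrom {u} w := by
  have h : M.evalFrom {s} (r :: w) = M.evalFrom (M.stepSet {s} r) w := rfl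
  rw [h, mem_evalFrom_union_iff]
  simp [NFA.mem_stepSet]

lemma decide_cons_ne {E : Type*} [DecidableEq E] (a b : E) (l m : List E) :
    decide (a :: l ≠ b :: m) = (decide (a ≠ b) || decide (l ≠ m)) := by
  by_cases h : a = b <;> by_cases h' : l = m <;> simp [h, h']

lemma EdgePath_nil_inv {P Δ E : Type*} {src tgt : E → P} {lbl : E → Δ} {Fb : Set P}
    {q : P} {l : List E} (h : EdgePath src tgt lbl Fb q [] l) : l = [] ∧ q ∈ Fb := by
  cases h with | nil h => exact ⟨rfl, h⟩

lemma EdgePath_cons_inv {P Δ E : Type*} {src tgt : E → P} {lbl : E → Δ} {Fb : Set P}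
    {q : P} {r : Δ} {w : List Δ} {l : List E}
    (h : EdgePath src tgt lbl Fb q (r :: w) l) :
    ∃ e l', l = e :: l' ∧ src e = q ∧ lbl e = r ∧ EdgePath src tgt lbl Fb (tgt e) w l' := by
  cases h with | cons hs hl hp => exact ⟨_, _, rfl, hs, hl, hp⟩

lemma powerNFA_claim {P Δ E : Type*} [DecidableEq E]
    (src tgt : E → P) (lbl : E → Δ) (p0 : P) (Fb : Set P) (k : ℕ) (w : List Δ)
    (s : (Fin k → P) × (Fin k → Fin k → Bool)) :
    (∃ t ∈ (powerNFA src tgt lbl k p0 Fb).accept,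
        t ∈ (powerNFA src tgt lbl k p0 Fb).evalFrom {s} w) ↔
      ∃ ρ : Fin k → List E,
        (∀ i, EdgePath src tgt lbl Fb (s.1 i) w (ρ i)) ∧
        (∀ i j, (s.2 i j || decide (ρ i ≠ ρ j)) = true) := by
  induction w generalizing s with
  | nil =>
    simp only [NFA.evalFrom, List.foldl_nil, Set.mem_singleton_iff]
    constructor
    · rintro ⟨t, ⟨hF, hψ⟩, rfl⟩
      refine ⟨fun _ => [], fun i => EdgePath.nil (hF i), fun i j => ?_⟩
      simp [hψ]
    · rintro ⟨ρ, hρ, hψ⟩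
      have hnil : ∀ i, ρ i = [] ∧ s.1 i ∈ Fb := fun i => EdgePath_nil_inv (hρ i)
      refine ⟨s, ⟨fun i => (hnil i).2, ?_⟩, rfl⟩
      funext i j
      have h := hψ i j
      rw [(hnil i).1, (hnil j).1] at h
      simpa using h
  | cons r w ih =>
    simp only [mem_evalFrom_cons_iff]
    constructor
    · rintro ⟨t, ht, u, hu, hev⟩
      obtain ⟨e, he, hψ'⟩ := hu
      obtain ⟨ρ', hρ', hψ⟩ := (ih u).1 ⟨t, ht, hev⟩
      refine ⟨fun i => e i :: ρ' i, fun i => ?_, fun i j => ?_⟩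
      · refine EdgePath.cons (he i).2.1 (he i).1 ?_
        rw [(he i).2.2]
        exact hρ' i
      · rw [decide_cons_ne, ← Bool.or_assoc]
        have hu2 : u.2 i j = (s.2 i j || decide (e i ≠ e j)) := by rw [hψ']
        rw [← hu2]
        exact hψ i j
    · rintro ⟨ρ, hρ, hψ⟩
      have h : ∀ i, ∃ e l, ρ i = e :: l ∧ src e = s.1 i ∧ lbl e = r ∧
          EdgePath src tgt lbl Fb (tgt e) w l := fun i => EdgePath_cons_inv (hρ i)
      choose e l hcons hsrc hlbl hpath using h
      set u : (Fin k → P) × (Fin k → Fin k → Bool) :=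
        (fun i => tgt (e i), fun i j => s.2 i j || decide (e i ≠ e j)) with hudef
      have hcond : ∀ i j, (u.2 i j || decide (l i ≠ l j)) = true := by
        intro i j
        have h := hψ i j
        rw [hcons i, hcons j, decide_cons_ne, ← Bool.or_assoc] at h
        exact h
      obtain ⟨t, ht, hev⟩ := (ih u).2 ⟨l, hpath, hcond⟩
      exact ⟨t, ht, u, ⟨e, fun i => ⟨hlbl i, hsrc i, rfl⟩, rfl⟩, hev⟩

/-- For a finite multi-edge automaton `B` and `k ≥ 1`, a word
`w` is accepted by the Boolean-matrix product NFA `B^k` iff there are at least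
`k` distinct accepting transition paths spelling `w` in `B`. -/
theorem powerNFA_accepts_iff_k_paths
    {P Δ E : Type*} [Fintype P] [Fintype Δ] [Fintype E] [DecidableEq E]
    (src tgt : E → P) (lbl : E → Δ) (p0 : P) (Fb : Set P)
    (k : ℕ) (hk : 1 ≤ k) (w : List Δ) :
    w ∈ (powerNFA src tgt lbl k p0 Fb).accepts ↔
      ∃ ρ : Fin k → List E, Function.Injective ρ ∧
        ∀ i, EdgePath src tgt lbl Fb p0 w (ρ i) := by
  rw [NFA.mem_accepts]
  have hstart : (powerNFA src tgt lbl k p0 Fb).start =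
      ({(fun _ => p0, fun i j => decide (i = j))} :
        Set ((Fin k → P) × (Fin k → Fin k → Bool))) := rfl
  rw [hstart, powerNFA_claim]
  constructor
  · rintro ⟨ρ, hρ, hψ⟩
    refine ⟨ρ, fun i j hij => ?_, hρ⟩
    have h := hψ i j
    rw [hij] at h
    simpa using h
  · rintro ⟨ρ, hinj, hρ⟩
    refine ⟨ρ, hρ, fun i j => ?_⟩
    by_cases h : i = j
    · simp [h]
    · have : ρ i ≠ ρ j := fun he => h (hinj he)
      simp [this]
end

section
/- Let A be an annotated automaton over the multiplicity semiring 𝒩 = (ℕ, +, ·, 0, 1) with finite state set, finite alphabet Δ, finite transition set, initial state and final states, and let L = [A]. Let B be the multi-edge automaton obtained from A by replacing each transition of weight n by n parallel unweighted copies, and for k ≥ 1 let B^k be the Boolean-matrix product NFA built from B (states P_B^k × Ψ_k, initial state (p_{B,0},…,p_{B,0}, ψ_0) with ψ_0 the identity pattern, final states F_B^k × {all-ones matrix}, and transitions that simultaneously advance k edges of B on the same letter while setting ψ'[i,j] = 1 iff ψ[i,j] = 1 or the i-th and j-th chosen edges differ). Then ⌊L^{k̆}⌋ = L(B^k): a word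 w satisfies [A](w) ≥ k if and only if w is accepted by B^k. -/
/-!
A word `w` is accepted by `B^k` iff there are `k` pairwise distinct accepting edge-paths of the
multi-edge automaton `B` spelling `w`: the `k` components of `B^k` follow `k` such paths in
lockstep, and the Boolean matrix records which pairs of them have diverged so far, so it ends
all-ones exactly when the `k` paths are pairwise distinct. Since each weight-`n` transition
contributes `n` parallel edges, `[A](w)` is the number of accepting edge-paths of `B` for `w`,
and `k` distinct ones exist iff `k ≤ [A](w)`.
-/

/-- The annotated language `[A]` of an annotated automaton over the
multiplicity semiring `𝒩 = (ℕ, +, ·, 0, 1)`: `multVal τ F w q` is the sum over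
accepting transition paths spelling `w` from `q` of the product of the
transition weights along the path (`0` if there is none). -/
def multVal {P Δ : Type*} [DecidableEq P] [DecidableEq Δ]
    (τ : Finset (P × Δ × ℕ × P)) (F : Finset P) : List Δ → P → ℕ
  | [], q => if q ∈ F then 1 else 0
  | r :: w, q =>
      ∑ t ∈ τ, if t.1 = q ∧ t.2.1 = r then t.2.2.1 * multVal τ F w t.2.2.2 else 0

/-- The edge type of the multi-edge automaton `B` obtained from a multiplicity
annotated automaton with transition set `τ` by replacing each transition of
weight `n` by `n` parallel unweighted copies: an edge is a pair of a
transition `t ∈ τ` and an index `j < weight(t)` selecting one copy. -/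
abbrev MultiEdge {P Δ : Type*} (τ : Finset (P × Δ × ℕ × P)) : Type _ :=
  {e : (P × Δ × ℕ × P) × ℕ // e.1 ∈ τ ∧ e.2 < e.1.2.2.1}

open Finset

section Walks

variable {P Δ E : Type*} (src tgt : E → P) (lbl : E → Δ)

def IsLabelledWalk : P → List Δ → List E → P → Prop
  | q, [], [], q' => q' = q
  | q, r :: w, e :: es, q' => lbl e = r ∧ src e = q ∧ IsLabelledWalk (tgt e) w es q'
  | _, _, _, _ => False

variable {src tgt lbl}

theorem isLabelledWalk_nil_iff {q q' : P} {es : List E} :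
    IsLabelledWalk src tgt lbl q [] es q' ↔ es = [] ∧ q' = q := by
  cases es <;> simp [IsLabelledWalk]

theorem isLabelledWalk_cons_iff {q q' : P} {r : Δ} {w : List Δ} {es : List E} :
    IsLabelledWalk src tgt lbl q (r :: w) es q' ↔
      ∃ e es', es = e :: es' ∧ lbl e = r ∧ src e = q ∧
        IsLabelledWalk src tgt lbl (tgt e) w es' q' := by
  cases es <;> simp [IsLabelledWalk]

end Walks

theorem diag_or_ne_eq_true_iff_injective {ι α : Type*} [DecidableEq ι] [DecidableEq α]
    (f : ι → α) :
    ((fun i j => decide (i = j) || decide (f i ≠ f j)) = fun _ _ => true) ↔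
      Function.Injective f := by
  simp [funext_iff, Function.Injective, or_iff_not_imp_right]

theorem le_card_iff_exists_injective {α : Type*} (s : Finset α) (k : ℕ) :
    k ≤ #s ↔ ∃ f : Fin k → α, (∀ i, f i ∈ s) ∧ Function.Injective f := by
  constructor
  · intro h
    obtain ⟨f⟩ := Function.Embedding.nonempty_of_card_le
      (by simpa using h : Fintype.card (Fin k) ≤ Fintype.card s)
    exact ⟨fun i => f i, fun i => (f i).2, fun i j hij => f.injective (Subtype.ext hij)⟩
  · rintro ⟨f, hf, hinj⟩
    simpa using card_le_card_of_injOn (s := univ) f (fun i _ => hf i) hinj.injOn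

section PowerNFA

variable {P Δ E : Type*} [DecidableEq E] {src tgt : E → P} {lbl : E → Δ}
  {k : ℕ} {p0 : P} {Fb : Set P}

theorem powerNFA_mem_evalFrom_singleton {w : List Δ} :
    ∀ {s₀ s : (Fin k → P) × (Fin k → Fin k → Bool)},
      s ∈ (powerNFA src tgt lbl k p0 Fb).evalFrom {s₀} w ↔
        ∃ es : Fin k → List E, (∀ i, IsLabelledWalk src tgt lbl (s₀.1 i) w (es i) (s.1 i)) ∧
          s.2 = fun i j => s₀.2 i j || decide (es i ≠ es j) := by
  induction w with
  | nil =>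
    intro s₀ s
    simp only [NFA.evalFrom_nil, Set.mem_singleton_iff, isLabelledWalk_nil_iff]
    constructor
    · rintro rfl
      exact ⟨fun _ => [], fun _ => ⟨rfl, rfl⟩, by simp⟩
    · rintro ⟨es, hwalk, hψ⟩
      refine Prod.ext (funext fun i => (hwalk i).2) ?_
      simp [hψ, (hwalk _).1]
  | cons r w ih =>
    intro s₀ s
    rw [NFA.evalFrom_cons, NFA.stepSet_singleton, NFA.mem_evalFrom_iff_exists]
    simp only [ih, isLabelledWalk_cons_iff]
    constructor
    · rintro ⟨s₁, ⟨e, he, hψ₁⟩, es, hwalk, hψ⟩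
      refine ⟨fun i => e i :: es i, fun i => ⟨e i, es i, rfl, (he i).1, (he i).2.1, ?_⟩, ?_⟩
      · rw [(he i).2.2]; exact hwalk i
      · funext i j
        simp [hψ, hψ₁, Bool.or_assoc]
    · rintro ⟨es, hwalk, hψ⟩
      choose e es' hes hlbl hsrc hwalk' using hwalk
      refine ⟨(fun i => tgt (e i), fun i j => s₀.2 i j || decide (e i ≠ e j)),
        ⟨e, fun i => ⟨hlbl i, hsrc i, rfl⟩, rfl⟩, es', hwalk', ?_⟩
      funext i j
      simp [hψ, hes, Bool.or_assoc]

theorem mem_powerNFA_accepts {w : List Δ} :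
    w ∈ (powerNFA src tgt lbl k p0 Fb).accepts ↔
      ∃ es : Fin k → List E, (∀ i, ∃ q ∈ Fb, IsLabelledWalk src tgt lbl p0 w (es i) q) ∧
        Function.Injective es := by
  rw [NFA.mem_accepts]
  change (∃ s ∈ _, s ∈ (powerNFA src tgt lbl k p0 Fb).evalFrom {_} w) ↔ _
  simp only [powerNFA_mem_evalFrom_singleton]
  constructor
  · rintro ⟨s, ⟨hF, hψF⟩, es, hwalk, hψ⟩
    exact ⟨es, fun i => ⟨s.1 i, hF i, hwalk i⟩,
      (diag_or_ne_eq_true_iff_injective es).1 (hψ ▸ hψF)⟩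
  · rintro ⟨es, hwalk, hinj⟩
    choose q hq hwalk using hwalk
    exact ⟨(q, fun _ _ => true), ⟨hq, rfl⟩, es, hwalk,
      ((diag_or_ne_eq_true_iff_injective es).2 hinj).symm⟩

end PowerNFA

section AcceptingWalks

variable {P Δ E : Type*} [DecidableEq P] [DecidableEq Δ] [Fintype E] [DecidableEq E]
  (src tgt : E → P) (lbl : E → Δ) (F : Finset P)

def acceptingWalks : List Δ → P → Finset (List E)
  | [], q => if q ∈ F then {[]} else ∅
  | r :: w, q => ({e | src e = q ∧ lbl e = r} : Finset E).biUnion fun e =>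
      (acceptingWalks w (tgt e)).map ⟨List.cons e, List.cons_injective⟩

variable {src tgt lbl F}

theorem mem_acceptingWalks {w : List Δ} :
    ∀ {q : P} {es : List E}, es ∈ acceptingWalks src tgt lbl F w q ↔
      ∃ q' ∈ F, IsLabelledWalk src tgt lbl q w es q' := by
  induction w with
  | nil =>
    intro q es
    by_cases hq : q ∈ F <;> simp [acceptingWalks, isLabelledWalk_nil_iff, hq]
  | cons r w ih =>
    intro q es
    simp only [acceptingWalks, mem_biUnion, mem_filter, mem_univ, true_and, mem_map,
      Function.Embedding.coeFn_mk, ih, isLabelledWalk_cons_iff]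
    constructor
    · rintro ⟨e, ⟨hsrc, hlbl⟩, es', ⟨q', hq', hwalk⟩, rfl⟩
      exact ⟨q', hq', e, es', rfl, hlbl, hsrc, hwalk⟩
    · rintro ⟨q', hq', e, es', rfl, hlbl, hsrc, hwalk⟩
      exact ⟨e, ⟨hsrc, hlbl⟩, es', ⟨q', hq', hwalk⟩, rfl⟩

theorem card_acceptingWalks_cons (r : Δ) (w : List Δ) (q : P) :
    #(acceptingWalks src tgt lbl F (r :: w) q) =
      ∑ e with src e = q ∧ lbl e = r, #(acceptingWalks src tgt lbl F w (tgt e)) := by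
  rw [acceptingWalks, card_biUnion]
  · simp only [card_map]
  · intro e _ e' _ hne
    simp only [disjoint_left, mem_map, Function.Embedding.coeFn_mk]
    rintro _ ⟨l, -, rfl⟩ ⟨l', -, h⟩
    exact hne (List.cons_eq_cons.1 h).1.symm

end AcceptingWalks

section MultiEdge

variable {P Δ : Type*} (τ : Finset (P × Δ × ℕ × P))

def multiEdgeEquivSigma : MultiEdge τ ≃ Σ t : τ, Fin t.1.2.2.1 where
  toFun e := ⟨⟨e.1.1, e.2.1⟩, ⟨e.1.2, e.2.2⟩⟩
  invFun x := ⟨(x.1.1, x.2.1), x.1.2, x.2.2⟩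

noncomputable instance : Fintype (MultiEdge τ) :=
  Fintype.ofEquiv _ (multiEdgeEquivSigma τ).symm

theorem sum_multiEdge {M : Type*} [AddCommMonoid M] (f : P × Δ × ℕ × P → M) :
    ∑ e : MultiEdge τ, f e.1.1 = ∑ t ∈ τ, t.2.2.1 • f t := by
  rw [← (multiEdgeEquivSigma τ).symm.sum_comp, ← univ_sigma_univ, sum_sigma,
    ← sum_coe_sort τ]
  simp [multiEdgeEquivSigma]

variable [DecidableEq P] [DecidableEq Δ] (F : Finset P)

theorem multVal_eq_card_acceptingWalks (w : List Δ) : ∀ q : P,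
    multVal τ F w q = #(acceptingWalks (E := MultiEdge τ)
      (fun e => e.1.1.1) (fun e => e.1.1.2.2.2) (fun e => e.1.1.2.1) F w q) := by
  induction w with
  | nil => intro q; by_cases hq : q ∈ F <;> simp [multVal, acceptingWalks, hq]
  | cons r w ih =>
    intro q
    rw [multVal, card_acceptingWalks_cons, sum_filter]
    simp only [← ih]
    rw [sum_multiEdge τ fun t => if t.1 = q ∧ t.2.1 = r then multVal τ F w t.2.2.2 else 0]
    refine sum_congr rfl fun t _ => ?_
    rw [smul_ite, smul_zero, smul_eq_mul]

end MultiEdge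

theorem outer_sphere_support_eq_powerNFA_language_general
    {P Δ : Type*} [DecidableEq P] [DecidableEq Δ]
    (τ : Finset (P × Δ × ℕ × P)) (p0 : P) (F : Finset P)
    (k : ℕ) (hk : 1 ≤ k) (w : List Δ) :
    (multVal τ F w p0 ≠ 0 ∧ k ≤ multVal τ F w p0) ↔
      w ∈ (powerNFA (E := MultiEdge τ)
        (fun e => e.1.1.1) (fun e => e.1.1.2.2.2) (fun e => e.1.1.2.1)
        k p0 (↑F : Set P)).accepts := by
  rw [multVal_eq_card_acceptingWalks, mem_powerNFA_accepts,
    and_iff_right_of_imp fun h => Nat.one_le_iff_ne_zero.mp (hk.trans h),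
    le_card_iff_exists_injective]
  simp only [mem_acceptingWalks, mem_coe]

/-- Let `A` be an annotated automaton over the multiplicity
semiring with `L = [A]`, `B` the multi-edge automaton obtained by replacing
each weight-`n` transition by `n` parallel copies, and `B^k` (for `k ≥ 1`) the
Boolean-matrix product NFA built from `B`. Then `⌊L^{k̆}⌋ = L(B^k)`: a word `w`
satisfies `[A](w) ≥ k` (and `[A](w) ≠ 0`) iff `w` is accepted by `B^k`. -/
theorem outer_sphere_support_eq_powerNFA_language
    {P Δ : Type*} [Fintype P] [DecidableEq P] [Fintype Δ] [DecidableEq Δ]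
    (τ : Finset (P × Δ × ℕ × P)) (p0 : P) (F : Finset P)
    (k : ℕ) (hk : 1 ≤ k) (w : List Δ) :
    (multVal τ F w p0 ≠ 0 ∧ k ≤ multVal τ F w p0) ↔
      w ∈ (powerNFA (E := MultiEdge τ)
        (fun e => e.1.1.1) (fun e => e.1.1.2.2.2) (fun e => e.1.1.2.1)
        k p0 (↑F : Set P)).accepts :=
  outer_sphere_support_eq_powerNFA_language_general τ p0 F k hk w
end
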